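/- arXiv:2407.10297 — 4 statements merged into one kernel-verified Lean document; each statement's English description precedes it below -/
import Mathlib

section
/- Let M, N be coprime positive integers with M < L_s+1 and N < L_t+1, where L_s, L_t are positive integers. Then the cardinality of the set { lM + pN : 0 ≤ l ≤ L_t, 0 ≤ p ≤ L_s } equals N(L_s+1) + M(L_t+1) − MN. -/
-- canonical representative lemma
lemma aux_rep (M N Ls Lt : ℕ) (hN : 0 < N) :
    ∀ l p : ℕ, l ≤ Lt → p ≤ Ls →
      ∃ l' p', l' ≤ Lt ∧ p' ≤ Ls ∧ (l' < N ∨ Ls < p' + M) ∧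
        l' * M + p' * N = l * M + p * N := by
  intro l
  induction l using Nat.strong_induction_on with
  | _ l ih =>
    intro p hl hp
    by_cases h1 : l < N
    · exact ⟨l, p, hl, hp, Or.inl h1, rfl⟩
    · by_cases h2 : Ls < p + M
      · exact ⟨l, p, hl, hp, Or.inr h2, rfl⟩
      · push_neg at h1 h2
        obtain ⟨l', p', h3, h4, h5, h6⟩ := ih (l - N) (by omega) (p + M) (by omega) (by omega)
        refine ⟨l', p', h3, h4, h5, ?_⟩
        rw [h6]
        have : (l - N) * M + (p + M) * N = l * M + p * N := by
          have : l - N + N = l := by omega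
          nlinarith [this]
        omega

lemma aux_inj (M N Ls Lt : ℕ) (hM : 0 < M) (hN : 0 < N)
    (hcop : Nat.Coprime M N) (a1 a2 b1 b2 : ℕ)
    (ha2 : a2 ≤ Ls) (hb : b1 < N ∨ Ls < b2 + M)
    (hle : a1 ≤ b1)
    (heq : a1 * M + a2 * N = b1 * M + b2 * N) : a1 = b1 ∧ a2 = b2 := by
  have hb2a2 : b2 ≤ a2 := by nlinarith
  have hd : (b1 - a1) * M = (a2 - b2) * N := by
    have h1 : b1 - a1 + a1 = b1 := by omega
    have h2 : a2 - b2 + b2 = a2 := by omega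
    nlinarith [h1, h2]
  have hdvd : N ∣ (b1 - a1) := by
    have : N ∣ (b1 - a1) * M := ⟨a2 - b2, by rw [hd]; ring⟩
    exact (Nat.Coprime.dvd_of_dvd_mul_right hcop.symm this)
  rcases Nat.eq_zero_or_pos (b1 - a1) with h0 | hpos
  · have : a1 = b1 := by omega
    subst this
    have : a2 = b2 := by
      have := heq
      have : a2 * N = b2 * N := by omega
      exact Nat.eq_of_mul_eq_mul_right hN this
    exact ⟨rfl, this⟩
  · exfalso
    have hge : N ≤ b1 - a1 := Nat.le_of_dvd hpos hdvd
    have hb1N : N ≤ b1 := by omega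
    have hLs : Ls < b2 + M := by omega
    have : M ≤ a2 - b2 := by nlinarith
    omega

theorem stmt_3 (M N Ls Lt : ℕ) (hM : 0 < M) (hN : 0 < N)
    (hcop : Nat.Coprime M N) (hMLs : M ≤ Ls) (hNLt : N ≤ Lt) :
    (((Finset.range (Lt + 1)) ×ˢ (Finset.range (Ls + 1))).image
      (fun q : ℕ × ℕ => q.1 * M + q.2 * N)).card
      = N * (Ls + 1) + M * (Lt + 1) - M * N := by
  classical
  set f : ℕ × ℕ → ℕ := fun q => q.1 * M + q.2 * N with hf
  set T := (Finset.range (Lt + 1)) ×ˢ (Finset.range (Ls + 1)) with hT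
  set P : ℕ × ℕ → Prop := fun q => q.1 < N ∨ Ls < q.2 + M with hP
  have himg : T.image f = (T.filter P).image f := by
    apply Finset.Subset.antisymm
    · intro v hv
      simp only [Finset.mem_image] at hv ⊢
      obtain ⟨⟨l, p⟩, hq, rfl⟩ := hv
      simp only [hT, Finset.mem_product, Finset.mem_range] at hq
      obtain ⟨l', p', h3, h4, h5, h6⟩ := aux_rep M N Ls Lt hN l p (by omega) (by omega)
      refine ⟨(l', p'), ?_, h6⟩
      simp only [Finset.mem_filter, hT, hP, Finset.mem_product, Finset.mem_range]
      exact ⟨⟨by omega, by omega⟩, h5⟩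
    · exact Finset.image_subset_image (Finset.filter_subset _ _)
  rw [himg]
  rw [Finset.card_image_of_injOn]
  · -- card of the filtered set
    have hcompl : T.filter (fun q => ¬ P q)
        = ((Finset.range (Lt+1)).filter (fun x => N ≤ x)) ×ˢ
          ((Finset.range (Ls+1)).filter (fun x => x + M ≤ Ls)) := by
      rw [← Finset.filter_product]
      apply Finset.filter_congr
      intro q hq
      simp only [hP]
      constructor
      · intro h; omega
      · intro h; omega
    have h1 : ((Finset.range (Lt+1)).filter (fun x => N ≤ x)) = Finset.Ico N (Lt+1) := by
      ext a; simp [Finset.mem_filter, Finset.mem_Ico, Nat.lt_succ_iff]; omega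
    have h2 : ((Finset.range (Ls+1)).filter (fun x => x + M ≤ Ls)) = Finset.range (Ls - M + 1) := by
      ext a; simp [Nat.lt_succ_iff]; omega
    have hcc : (T.filter (fun q => ¬ P q)).card = (Lt + 1 - N) * (Ls - M + 1) := by
      rw [hcompl, h1, h2, Finset.card_product, Nat.card_Ico, Finset.card_range]
    have htot := Finset.card_filter_add_card_filter_not (s := T) (p := P)
    have hTcard : T.card = (Lt + 1) * (Ls + 1) := by
      simp [hT, Finset.card_product]
    obtain ⟨a, ha⟩ : ∃ a, Lt + 1 = a + N := ⟨Lt + 1 - N, by omega⟩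
    obtain ⟨b, hb⟩ : ∃ b, Ls + 1 = b + M := ⟨Ls + 1 - M, by omega⟩
    have h3 : Lt + 1 - N = a := by omega
    have h4 : Ls - M + 1 = b := by omega
    rw [hcc, hTcard, h3, h4] at htot
    rw [ha, hb] at htot ⊢
    have e1 : (a + N) * (b + M) = a * b + (N * b + M * a + M * N) := by ring
    have e2 : N * (b + M) + M * (a + N) = (N * b + M * a + M * N) + M * N := by ring
    rw [e2, Nat.add_sub_cancel, e1] at *
    linarith [htot]
  · -- injectivity
    intro q hq r hr hqr
    simp only [Finset.coe_filter, Set.mem_setOf_eq, hT, hP, Finset.mem_product,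
      Finset.mem_range, Nat.lt_succ_iff] at hq hr
    obtain ⟨⟨hq1, hq2⟩, hq3⟩ := hq
    obtain ⟨⟨hr1, hr2⟩, hr3⟩ := hr
    simp only [hf] at hqr
    rcases le_total q.1 r.1 with h | h
    · obtain ⟨e1, e2⟩ := aux_inj M N Ls Lt hM hN hcop q.1 q.2 r.1 r.2 hq2 hr3 h hqr
      exact Prod.ext e1 e2
    · obtain ⟨e1, e2⟩ := aux_inj M N Ls Lt hM hN hcop r.1 r.2 q.1 q.2 hr2 hq3 h hqr.symm
      exact Prod.ext e1.symm e2.symm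
end

section
/- Let M, N be coprime positive integers with M ≤ L_s and N ≤ L_t. The set S = { lM + pN : 0 ≤ l ≤ L_t, 0 ≤ p ≤ L_s } contains every integer in the contiguous interval [(M-1)(N-1), L_s N + L_t M − (M-1)(N-1)]. -/
/-- Key lemma: any `k ≥ (M-1)(N-1)` is `l*M + p*N` with `l < N`. -/
lemma key_rep (M N k : ℕ) (hM : 0 < M) (hN : 0 < N) (hcop : Nat.Coprime M N)
    (hk : (M - 1) * (N - 1) ≤ k) : ∃ l p : ℕ, l < N ∧ k = l * M + p * N := by
  haveI : NeZero N := ⟨hN.ne'⟩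
  set l : ℕ := ((k : ZMod N) * (M : ZMod N)⁻¹).val with hl
  have hlN : l < N := ZMod.val_lt _
  have hu : IsUnit (M : ZMod N) := (ZMod.isUnit_iff_coprime M N).mpr hcop
  have hmod : ((l * M : ℕ) : ZMod N) = (k : ZMod N) := by
    push_cast
    rw [hl, ZMod.natCast_val, ZMod.cast_id, mul_assoc, ZMod.inv_mul_of_unit _ hu, mul_one]
  have hdvd : (N : ℤ) ∣ (k : ℤ) - (l * M : ℕ) :=
    ((ZMod.natCast_eq_natCast_iff _ _ _).mp hmod).dvd
  have hle : l * M ≤ (N - 1) * M := Nat.mul_le_mul_right M (by omega)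
  have hnn : (0 : ℤ) ≤ (k : ℤ) - (l * M : ℕ) := by
    obtain ⟨c, hc⟩ := hdvd
    rcases le_or_gt 0 c with h | h
    · rw [hc]; positivity
    · exfalso
      have h1 : (c : ℤ) ≤ -1 := by omega
      have h2 : (k : ℤ) - (l * M : ℕ) ≤ -N := by
        rw [hc]
        calc (N : ℤ) * c ≤ (N : ℤ) * (-1) := by
              apply mul_le_mul_of_nonneg_left h1 (by positivity)
          _ = -N := by ring
      have h3 : ((M - 1) * (N - 1) : ℕ) ≤ (k : ℤ) := by exact_mod_cast hk
      have h4 : ((M - 1) * (N - 1) : ℕ) = ((M : ℤ) - 1) * ((N : ℤ) - 1) := by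
        push_cast [Nat.cast_sub hM, Nat.cast_sub hN]; ring
      have h5 : ((l * M : ℕ) : ℤ) ≤ ((N : ℤ) - 1) * M := by
        calc ((l * M : ℕ) : ℤ) ≤ ((N - 1) * M : ℕ) := by exact_mod_cast hle
          _ = ((N : ℤ) - 1) * M := by push_cast [Nat.cast_sub hN]; ring
      nlinarith [hM.le, hN.le]
  obtain ⟨c, hc⟩ := hdvd
  refine ⟨l, c.toNat, hlN, ?_⟩
  have hc0 : 0 ≤ c := by
    by_contra h
    push_neg at h
    nlinarith [hnn, hc, (Nat.cast_pos.mpr hN : (0:ℤ) < N)]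
  have : (k : ℤ) = (l * M : ℕ) + N * c := by linarith [hc]
  zify
  rw [this, Int.toNat_of_nonneg hc0]
  push_cast
  ring

theorem stmt_4 (M N Ls Lt : ℕ) (hM : 0 < M) (hN : 0 < N)
    (hcop : Nat.Coprime M N) (hMLs : M ≤ Ls) (hNLt : N ≤ Lt) :
    ∀ k : ℕ, (M - 1) * (N - 1) ≤ k →
      k ≤ Ls * N + Lt * M - (M - 1) * (N - 1) →
      ∃ l p : ℕ, l ≤ Lt ∧ p ≤ Ls ∧ k = l * M + p * N := by
  intro k hk1 hk2
  obtain ⟨l, p, hlN, hrep⟩ := key_rep M N k hM hN hcop hk1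
  rcases le_or_gt p Ls with hp | hp
  · exact ⟨l, p, by omega, hp, hrep⟩
  · -- k is big; use dual representation of k' = T - k
    have hT : (M - 1) * (N - 1) ≤ Ls * N + Lt * M := by
      calc (M - 1) * (N - 1) ≤ M * N := Nat.mul_le_mul (by omega) (by omega)
        _ ≤ Ls * N + Lt * M := by nlinarith [Nat.mul_le_mul hMLs (le_refl N)]
    have hkT : k ≤ Ls * N + Lt * M := by omega
    set k' := Ls * N + Lt * M - k with hk'def
    have hk'ge : (N - 1) * (M - 1) ≤ k' := by
      have : (M - 1) * (N - 1) = (N - 1) * (M - 1) := Nat.mul_comm _ _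
      omega
    obtain ⟨l', p', hl'M, hrep'⟩ := key_rep N M k' hN hM hcop.symm hk'ge
    -- k ≥ (Ls+1)*N since p ≥ Ls+1
    have hkbig : Ls * N + N ≤ k := by
      have h := Nat.mul_le_mul_right N (show Ls + 1 ≤ p by omega)
      rw [Nat.succ_mul] at h
      omega
    have hk'lt : k' < Lt * M := by
      have h1 : N ≤ Lt * M := le_trans hNLt (Nat.le_mul_of_pos_right Lt hM)
      omega
    -- p' * M ≤ k' < Lt * M ⇒ p' < Lt
    have hp'Lt : p' < Lt := by
      have h1 : p' * M ≤ k' := by omega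
      by_contra h
      push_neg at h
      have : Lt * M ≤ p' * M := Nat.mul_le_mul_right M h
      omega
    have hl'Ls : l' ≤ Ls := by omega
    refine ⟨Lt - p', Ls - l', by omega, by omega, ?_⟩
    have e1 : (Lt - p') * M = Lt * M - p' * M := Nat.sub_mul Lt p' M
    have e2 : (Ls - l') * N = Ls * N - l' * N := Nat.sub_mul Ls l' N
    have h3 : p' * M ≤ Lt * M := Nat.mul_le_mul_right M (le_of_lt hp'Lt)
    have h4 : l' * N ≤ Ls * N := Nat.mul_le_mul_right N hl'Ls
    omega
end

section
/- Let M, N be coprime positive integers with M ≤ L_s and N ≤ L_t. The set of 'holes' H = { k ∈ [0, L_t M + L_s N] : k ∉ { lM + pN : 0 ≤ l ≤ L_t, 0 ≤ p ≤ L_s } } is symmetric under the map k ↦ L_t M + L_s N − k. -/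
theorem stmt_5 (M N Ls Lt : ℕ) (hM : 0 < M) (hN : 0 < N)
    (hcop : Nat.Coprime M N) (hMLs : M ≤ Ls) (hNLt : N ≤ Lt) :
    ∀ k : ℕ, k ≤ Lt * M + Ls * N →
      ((¬ ∃ l p : ℕ, l ≤ Lt ∧ p ≤ Ls ∧ k = l * M + p * N) ↔
       (¬ ∃ l p : ℕ, l ≤ Lt ∧ p ≤ Ls ∧ Lt * M + Ls * N - k = l * M + p * N)) := by
  intro k hk
  set S := Lt * M + Ls * N with hS
  have key : ∀ j : ℕ, (∃ l p : ℕ, l ≤ Lt ∧ p ≤ Ls ∧ j = l * M + p * N) →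
      ∃ l p : ℕ, l ≤ Lt ∧ p ≤ Ls ∧ S - j = l * M + p * N := by
    rintro j ⟨l, p, hl, hp, rfl⟩
    refine ⟨Lt - l, Ls - p, Nat.sub_le _ _, Nat.sub_le _ _, ?_⟩
    have h1 : l * M ≤ Lt * M := Nat.mul_le_mul_right _ hl
    have h2 : p * N ≤ Ls * N := Nat.mul_le_mul_right _ hp
    rw [Nat.sub_mul, Nat.sub_mul]
    omega
  constructor
  · intro h hrep
    exact h (by simpa [Nat.sub_sub_self hk] using key (S - k) hrep)
  · intro h hrep
    exact h (key k hrep)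
end

section
/- Let M and N be coprime positive integers and let L_t ≥ 1, L_s ≥ 1. Consider the (L_s+1)×(L_t+1) matrix Ω with entries Ω[p,l] = lM + pN. If N ≥ L_t+1 or M ≥ L_s+1 then Ω has (L_s+1)(L_t+1) distinct entries; otherwise (M < L_s+1 and N < L_t+1) Ω has exactly N(L_s+1)+M(L_t+1)−MN distinct entries. -/
lemma key_collision (M N : ℕ) (hN : 0 < N) (hcop : Nat.Coprime M N) {l l' p p' : ℕ}
    (hle : l ≤ l') (heq : l * M + p * N = l' * M + p' * N) :
    ∃ k, l' = l + k * N ∧ p = p' + k * M := by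
  obtain ⟨a, rfl⟩ := Nat.exists_eq_add_of_le hle
  rw [add_mul] at heq
  have h1 : p * N = a * M + p' * N := by linarith
  have hp' : p' ≤ p := Nat.le_of_mul_le_mul_right (by linarith [Nat.zero_le (a * M)]) hN
  obtain ⟨b, rfl⟩ := Nat.exists_eq_add_of_le hp'
  rw [add_mul] at h1
  have h2 : b * N = a * M := by linarith
  have hNa : N ∣ a := (Nat.Coprime.dvd_of_dvd_mul_right hcop.symm ⟨b, by linarith⟩)
  obtain ⟨k, rfl⟩ := hNa
  refine ⟨k, by ring, ?_⟩
  have h3 : b = k * M := Nat.eq_of_mul_eq_mul_right hN (by rw [h2]; ring)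
  rw [h3]

lemma reach_canon (M N Ls Lt : ℕ) (hN : 0 < N) :
    ∀ l p, l ≤ Lt → p ≤ Ls → ∃ l' p', l' ≤ Lt ∧ p' ≤ Ls ∧ (l' < N ∨ Ls < p' + M) ∧
      l' * M + p' * N = l * M + p * N := by
  intro l
  induction l using Nat.strong_induction_on with
  | _ l ih =>
    intro p hl hp
    by_cases h : l < N ∨ Ls < p + M
    · exact ⟨l, p, hl, hp, h, rfl⟩
    · push_neg at h
      obtain ⟨hNl, hpM⟩ := h
      obtain ⟨l', p', h1, h2, h3, h4⟩ := ih (l - N) (by omega) (p + M) (by omega) (by omega)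
      refine ⟨l', p', h1, h2, h3, ?_⟩
      rw [h4]
      obtain ⟨d, rfl⟩ := Nat.exists_eq_add_of_le hNl
      simp [Nat.add_sub_cancel_left]
      ring

theorem stmt_11 (M N Ls Lt : ℕ) (hM : 0 < M) (hN : 0 < N)
    (hcop : Nat.Coprime M N) :
    (((Finset.range (Lt + 1)) ×ˢ (Finset.range (Ls + 1))).image
      (fun q : ℕ × ℕ => q.1 * M + q.2 * N)).card
      = if N ≥ Lt + 1 ∨ M ≥ Ls + 1 then (Ls + 1) * (Lt + 1)
        else N * (Ls + 1) + M * (Lt + 1) - M * N := by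
  split_ifs with hcase
  · -- injective case
    rw [Finset.card_image_of_injOn, Finset.card_product, Finset.card_range,
      Finset.card_range, mul_comm]
    rintro ⟨l, p⟩ hq ⟨l', p'⟩ hq' heq
    simp only [Finset.mem_coe, Finset.mem_product, Finset.mem_range] at hq hq'
    simp only at heq
    have main : ∀ a b a' b' : ℕ, a ≤ a' → a' ≤ Lt → b ≤ Ls → b' ≤ Ls →
        a * M + b * N = a' * M + b' * N → a = a' ∧ b = b' := by
      intro a b a' b' hle ha' hb hb' he
      obtain ⟨k, hk1, hk2⟩ := key_collision M N hN hcop hle he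
      rcases Nat.eq_zero_or_pos k with rfl | hk
      · simp at hk1 hk2; omega
      · exfalso
        have h1 : N ≤ k * N := Nat.le_mul_of_pos_left N hk
        have h2 : M ≤ k * M := Nat.le_mul_of_pos_left M hk
        rcases hcase with h | h <;> linarith
    rcases le_total l l' with h | h
    · obtain ⟨e1, e2⟩ := main l p l' p' h (by omega) (by omega) (by omega) heq
      simp [e1, e2]
    · obtain ⟨e1, e2⟩ := main l' p' l p h (by omega) (by omega) (by omega) heq.symm
      simp [e1, e2]
  · push_neg at hcase
    obtain ⟨hNLt, hMLs⟩ := hcase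
    set f : ℕ × ℕ → ℕ := fun q => q.1 * M + q.2 * N with hf
    set T : Finset (ℕ × ℕ) :=
      ((Finset.range (Lt + 1)) ×ˢ (Finset.range (Ls + 1))).filter
        (fun q => q.1 < N ∨ Ls < q.2 + M) with hT
    have himg : ((Finset.range (Lt + 1)) ×ˢ (Finset.range (Ls + 1))).image f = T.image f := by
      apply Finset.Subset.antisymm
      · rw [Finset.image_subset_iff]
        rintro ⟨l, p⟩ hq
        simp only [Finset.mem_product, Finset.mem_range] at hq
        obtain ⟨l', p', h1, h2, h3, h4⟩ :=
          reach_canon M N Ls Lt hN l p (by omega) (by omega)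
        refine Finset.mem_image.mpr ⟨(l', p'), ?_, h4⟩
        simp only [hT, Finset.mem_filter, Finset.mem_product, Finset.mem_range]
        exact ⟨⟨by omega, by omega⟩, h3⟩
      · exact Finset.image_subset_image (Finset.filter_subset _ _)
    rw [himg]
    have hinj : Set.InjOn f T := by
      rintro ⟨l, p⟩ hq ⟨l', p'⟩ hq' heq
      simp only [hT, Finset.mem_coe, Finset.mem_filter, Finset.mem_product,
        Finset.mem_range] at hq hq'
      simp only [hf] at heq
      have main : ∀ a b a' b' : ℕ, a ≤ a' → b ≤ Ls → (a' < N ∨ Ls < b' + M) →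
          a * M + b * N = a' * M + b' * N → a = a' ∧ b = b' := by
        intro a b a' b' hle hb hc he
        obtain ⟨k, hk1, hk2⟩ := key_collision M N hN hcop hle he
        rcases Nat.eq_zero_or_pos k with rfl | hk
        · simp at hk1 hk2; omega
        · exfalso
          have h1 : N ≤ k * N := Nat.le_mul_of_pos_left N hk
          have h2 : M ≤ k * M := Nat.le_mul_of_pos_left M hk
          rcases hc with h | h <;> linarith
      rcases le_total l l' with h | h
      · obtain ⟨e1, e2⟩ := main l p l' p' h (by omega) hq'.2 heq
        simp [e1, e2]
      · obtain ⟨e1, e2⟩ := main l' p' l p h (by omega) hq.2 heq.symm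
        simp [e1, e2]
    rw [Finset.card_image_of_injOn hinj]
    have hsplit : T = (Finset.range N ×ˢ Finset.range (Ls + 1)) ∪
        (Finset.Ico N (Lt + 1) ×ˢ Finset.Ico (Ls + 1 - M) (Ls + 1)) := by
      ext ⟨l, p⟩
      simp only [hT, Finset.mem_filter, Finset.mem_product, Finset.mem_range,
        Finset.mem_union, Finset.mem_Ico]
      omega
    have hdisj : Disjoint (Finset.range N ×ˢ Finset.range (Ls + 1))
        ((Finset.Ico N (Lt + 1)) ×ˢ (Finset.Ico (Ls + 1 - M) (Ls + 1))) := by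
      rw [Finset.disjoint_left]
      rintro ⟨l, p⟩ h1 h2
      simp only [Finset.mem_product, Finset.mem_range, Finset.mem_Ico] at h1 h2
      omega
    rw [hsplit, Finset.card_union_of_disjoint hdisj, Finset.card_product,
      Finset.card_product, Finset.card_range, Finset.card_range, Nat.card_Ico, Nat.card_Ico]
    have e1 : Ls + 1 - (Ls + 1 - M) = M := by omega
    rw [e1]
    have h1 : N ≤ Lt + 1 := by omega
    have h2 : M ≤ Ls + 1 := by omega
    have h3 : M * N ≤ N * (Ls + 1) + M * (Lt + 1) := by
      have := Nat.mul_le_mul_left M h1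
      linarith [Nat.zero_le (N * (Ls + 1))]
    zify [h1, h2, h3]
    ring
end
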